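/- arXiv:2402.09053 — 2 statements merged into one kernel-verified Lean document; each statement's English description precedes it below -/
import Mathlib

section
/- If A and B are CR sets in semigroups S and T respectively, then A × B is a CR set in the product semigroup S × T. -/
/-!
Fix `k`. For a CR set `A` there is `r` such that every `Θ(A, F)` with `|F| ≤ k` is IP_r*: given
blocks `H₁ < ⋯ < H_r`, apply the CR property to the functions `n ↦ f(h₁) s f(h₂) s ⋯ s f(h_p)`
(`H_n = {h₁ < ⋯ < h_p}`, `s` arbitrary), and expand the resulting word into a word along a union
of the blocks `H_{t(1)}, …, H_{t(m)}`.

Two IP_r* sets meet, inside a bounded range. This is the finite unions theorem: Hindman's theorem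
for finite sums of the singletons `{i}` in `Multiset ℕ`, where a sum is duplicate-free only if its
summands are disjoint, gives a block sequence all of whose finite unions have the same colour;
compactness (an ultrafilter limit of colourings) bounds its length and support. A set `L` in
`Θ(A, F₁) ∩ Θ(B, F₂)` provides words in `A` and in `B` with the same positions, and their pairing is
a word in `A × B`.
-/

open Finset

/-- The word `a 0 * f (t 0) * a 1 * f (t 1) * ⋯ * a (m-1) * f (t (m-1)) * a m`. -/
def crWord {S : Type*} [Semigroup S] (m : ℕ) (a : Fin (m + 1) → S) (t : Fin m → ℕ)
    (f : ℕ → S) : S :=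
  (List.finRange m).foldl (fun x i => x * f (t i) * a i.succ) (a 0)

/-- `A` is a combinatorially rich (CR) set in the semigroup `S`. -/
def IsCRSet {S : Type*} [Semigroup S] (A : Set S) : Prop :=
  ∀ k : ℕ, ∃ r : ℕ, ∀ F : Finset (ℕ → S), F.Nonempty → F.card ≤ k →
    ∃ m : ℕ, 0 < m ∧ ∃ a : Fin (m + 1) → S, ∃ t : Fin m → ℕ,
      StrictMono t ∧ (∀ i, t i ≤ r) ∧ ∀ f ∈ F, crWord m a t f ∈ A

/-- An increasing block sequence of nonempty finite subsets of ℕ: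
each block is nonempty and every element of an earlier block is less
than every element of a later block (equivalently `max H_n < min H_{n+1}`). -/
def BlockSeq {r : ℕ} (H : Fin r → Finset ℕ) : Prop :=
  (∀ n, (H n).Nonempty) ∧ ∀ i j : Fin r, i < j → ∀ x ∈ H i, ∀ y ∈ H j, x < y

/-- Finite unions of a finite block sequence. -/
def FU {r : ℕ} (H : Fin r → Finset ℕ) : Set (Finset ℕ) :=
  {L | ∃ K : Finset (Fin r), K.Nonempty ∧ L = K.biUnion H}

def IsIPr (r : ℕ) (B : Set (Finset ℕ)) : Prop :=
  ∃ H : Fin r → Finset ℕ, BlockSeq H ∧ B = FU H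

def IsIPrStar (r : ℕ) (A : Set (Finset ℕ)) : Prop :=
  ∀ B : Set (Finset ℕ), IsIPr r B → (A ∩ B).Nonempty

def BlockSeqInf (H : ℕ → Finset ℕ) : Prop :=
  (∀ n, (H n).Nonempty) ∧ ∀ i j : ℕ, i < j → ∀ x ∈ H i, ∀ y ∈ H j, x < y

def IsIP (B : Set (Finset ℕ)) : Prop :=
  ∃ H : ℕ → Finset ℕ, BlockSeqInf H ∧
    B = {L | ∃ K : Finset ℕ, K.Nonempty ∧ L = K.biUnion H}

def IsIPStar (A : Set (Finset ℕ)) : Prop :=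
  ∀ B : Set (Finset ℕ), IsIP B → (A ∩ B).Nonempty

/-- `Θ(A,F)`: the nonempty finite sets `L = {t(1) < … < t(m)}` for which there is
`a ∈ S^{m+1}` with `a(1)·f(t(1))·a(2)⋯a(m)·f(t(m))·a(m+1) ∈ A` for all `f ∈ F`. -/
def Theta {S : Type*} [Semigroup S] (A : Set S) (F : Finset (ℕ → S)) : Set (Finset ℕ) :=
  {L | L.Nonempty ∧ ∃ a : Fin (L.card + 1) → S,
    ∀ f ∈ F, crWord L.card a (fun i => ((L.orderIsoOfFin rfl) i : ℕ)) f ∈ A}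

open Function

section Words

variable {S : Type*} [Semigroup S]

def listWord (f : ℕ → S) (h : S) (l : List (ℕ × S)) : S :=
  l.foldl (fun x p => x * f p.1 * p.2) h

theorem listWord_append (f : ℕ → S) (h : S) (l₁ l₂ : List (ℕ × S)) :
    listWord f h (l₁ ++ l₂) = listWord f (listWord f h l₁) l₂ :=
  List.foldl_append ..

theorem crWord_eq_listWord (m : ℕ) (a : Fin (m + 1) → S) (t : Fin m → ℕ) (f : ℕ → S) :
    crWord m a t f = listWord f (a 0) ((List.finRange m).map fun i => (t i, a i.succ)) := by
  rw [crWord, listWord, List.foldl_map]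

theorem MulHom.map_crWord {T : Type*} [Semigroup T] (φ : S →ₙ* T) (m : ℕ)
    (a : Fin (m + 1) → S) (t : Fin m → ℕ) (f : ℕ → S) :
    φ (crWord m a t f) = crWord m (φ ∘ a) t (φ ∘ f) :=
  (List.foldl_hom φ fun x i => by simp only [Function.comp_apply, map_mul]).symm

theorem mem_theta_of_map_fst_eq_sort {A : Set S} {F : Finset (ℕ → S)} {L : Finset ℕ}
    (hL : L.Nonempty) (h : S) (l : List (ℕ × S)) (hl : l.map Prod.fst = L.sort)
    (hw : ∀ f ∈ F, listWord f h l ∈ A) : L ∈ Theta A F := by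
  have hlen : l.length = L.card := by simpa using congrArg List.length hl
  refine ⟨hL, Fin.cons h fun i => l[i.cast hlen.symm].2, fun f hf => ?_⟩
  convert hw f hf using 1
  rw [crWord_eq_listWord]
  congr 1
  refine List.ext_getElem (by simp [hlen]) fun i h₁ h₂ => ?_
  have : L.sort[i]'(by simpa [hlen] using h₂) = l[i].1 := by simp [← hl]
  simp [Finset.orderEmbOfFin_apply, this]

def blockPairs {α : Type*} (s : α) : List ℕ → α → List (ℕ × α)
  | [], _ => []
  | [n], c => [(n, c)]
  | n :: n' :: ns, c => (n, s) :: blockPairs s (n' :: ns) c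

theorem map_fst_blockPairs {α : Type*} (s c : α) (ns : List ℕ) :
    (blockPairs s ns c).map Prod.fst = ns := by
  induction ns with
  | nil => rfl
  | cons n ns ih => cases ns with
    | nil => rfl
    | cons n' ns => simpa [blockPairs] using ih

def blockWord (f : ℕ → S) (s : S) : List ℕ → S
  | [] => s
  | [n] => f n
  | n :: n' :: ns => f n * s * blockWord f s (n' :: ns)

theorem listWord_blockPairs (f : ℕ → S) (s c h : S) {ns : List ℕ} (hns : ns ≠ []) :
    listWord f h (blockPairs s ns c) = h * blockWord f s ns * c := by
  induction ns generalizing h with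
  | nil => exact absurd rfl hns
  | cons n ns ih => cases ns with
    | nil => rfl
    | cons n' ns =>
      rw [blockPairs, listWord, List.foldl_cons, ← listWord, ih _ (List.cons_ne_nil _ _),
        blockWord]
      simp only [mul_assoc]

theorem listWord_blockWord (f : ℕ → S) (s : S) (B : ℕ → List ℕ) (h : S) (l : List (ℕ × S))
    (hB : ∀ p ∈ l, B p.1 ≠ []) :
    listWord (fun n => blockWord f s (B n)) h l =
      listWord f h (l.flatMap fun p => blockPairs s (B p.1) p.2) := by
  induction l generalizing h with
  | nil => rfl
  | cons p l ih =>
    rw [List.flatMap_cons, listWord_append, listWord_blockPairs f s _ _ (hB p (by simp)),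
      ← ih _ fun q hq => hB q (by simp [hq])]
    rfl

end Words

theorem BlockSeq.sort_biUnion {r : ℕ} {H : Fin r → Finset ℕ} (hH : BlockSeq H)
    {is : List (Fin r)} (his : is.Pairwise (· < ·)) :
    (is.toFinset.biUnion H).sort = is.flatMap fun i => (H i).sort := by
  have hsorted : (is.flatMap fun i => (H i).sort).Pairwise (· < ·) :=
    List.pairwise_flatMap.2 ⟨fun i _ => (H i).sortedLT_sort.pairwise,
      his.imp fun hij x hx y hy => hH.2 _ _ hij x (by simpa using hx) y (by simpa using hy)⟩
  have hset : (is.flatMap fun i => (H i).sort).toFinset = is.toFinset.biUnion H := by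
    ext x; simp
  rw [← hset]
  exact (List.toFinset_sort _ hsorted.nodup).2 (hsorted.imp le_of_lt)

theorem IsCRSet.isIPrStar_theta {S : Type*} [Semigroup S] {A : Set S} (hA : IsCRSet A)
    (k : ℕ) : ∃ r, ∀ F : Finset (ℕ → S), F.Nonempty → F.card ≤ k → IsIPrStar r (Theta A F) := by
  classical
  obtain ⟨r, hr⟩ := hA k
  refine ⟨r + 1, fun F ⟨f₀, hf₀⟩ hFk _ ⟨H, hH, hFU⟩ => ?_⟩
  subst hFU
  let s₀ := f₀ 0
  let B : ℕ → List ℕ := fun n => if h : n < r + 1 then (H ⟨n, h⟩).sort else []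
  obtain ⟨m, hm, a, t, ht, htr, hw⟩ := hr (F.image fun f n => blockWord f s₀ (B n))
    ⟨_, mem_image_of_mem _ hf₀⟩ (card_image_le.trans hFk)
  let t' : Fin m → Fin (r + 1) := fun i => ⟨t i, Nat.lt_succ_of_le (htr i)⟩
  have hBt : ∀ i, B (t i) = (H (t' i)).sort := fun i => dif_pos _
  let is := (List.finRange m).map t'
  have his : is.Pairwise (· < ·) := (List.pairwise_lt_finRange m).map _ fun _ _ hij => ht hij
  have his_ne : is.toFinset.Nonempty := ⟨t' ⟨0, hm⟩, by simp [is]⟩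
  let l₀ := (List.finRange m).map fun i => (t i, a i.succ)
  have hB_ne : ∀ p ∈ l₀, B p.1 ≠ [] := by
    simp only [l₀, List.mem_map, List.mem_finRange, true_and, forall_exists_index]
    rintro _ i rfl
    rw [hBt]
    exact List.ne_nil_of_length_pos (by simpa using hH.1 (t' i))
  refine ⟨is.toFinset.biUnion H, mem_theta_of_map_fst_eq_sort ?_ (a 0)
    (l₀.flatMap fun p => blockPairs s₀ (B p.1) p.2) ?_ fun f hf => ?_, is.toFinset, his_ne, rfl⟩
  · obtain ⟨i, hi⟩ := his_ne
    exact (hH.1 i).mono (subset_biUnion_of_mem H hi)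
  · rw [hH.sort_biUnion his]
    simp [l₀, is, List.map_flatMap, map_fst_blockPairs, List.flatMap_map, hBt]
  · rw [← listWord_blockWord f s₀ B _ _ hB_ne, ← crWord_eq_listWord]
    exact hw _ (mem_image_of_mem _ hf)

theorem Multiset.toFinset_sum {ι α : Type*} [DecidableEq α] (J : Finset ι)
    (b : ι → Multiset α) : (∑ j ∈ J, b j).toFinset = J.biUnion fun j => (b j).toFinset := by
  classical
  induction J using Finset.induction_on with
  | empty => simp
  | insert j J hj ih => rw [sum_insert hj, Multiset.toFinset_add, ih, biUnion_insert]

theorem Hindman.nodup_of_mem_FS_singletons {s : Stream' (Multiset ℕ)} {x : Multiset ℕ}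
    (hx : x ∈ Hindman.FS s) (k : ℕ) (hs : ∀ i, s.get i = {i + k}) :
    x ≠ 0 ∧ x.Nodup ∧ ∀ i ∈ x, k ≤ i := by
  induction hx generalizing k with
  | head' s => simp [Stream'.head, hs 0]
  | tail' s m _ ih =>
    obtain ⟨hm₀, hm, hmk⟩ := ih (k + 1) fun i => by
      rw [Stream'.get_tail, hs, add_right_comm, add_assoc]
    exact ⟨hm₀, hm, fun i hi => (hmk i hi).trans' k.le_succ⟩
  | cons' s m _ ih =>
    obtain ⟨-, hm, hmk⟩ := ih (k + 1) fun i => by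
      rw [Stream'.get_tail, hs, add_right_comm, add_assoc]
    simp only [Stream'.head, hs 0, zero_add, Multiset.singleton_add]
    refine ⟨Multiset.cons_ne_zero, Multiset.nodup_cons.2 ⟨fun hk => ?_, hm⟩, ?_⟩
    · exact (hmk k hk).not_gt k.lt_succ_self
    · simpa using fun i hi => (hmk i hi).trans' k.le_succ

theorem exists_pairwise_disjoint_biUnion_mem_or_mem_compl (C : Set (Finset ℕ)) :
    ∃ L : ℕ → Finset ℕ, (∀ i, (L i).Nonempty) ∧ Pairwise (Disjoint on L) ∧
      ((∀ J : Finset ℕ, J.Nonempty → J.biUnion L ∈ C) ∨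
        (∀ J : Finset ℕ, J.Nonempty → J.biUnion L ∈ Cᶜ)) := by
  classical
  let a : Stream' (Multiset ℕ) := fun i => {i}
  have ha : ∀ x ∈ Hindman.FS a, x ≠ 0 ∧ x.Nodup := fun x hx =>
    (Hindman.nodup_of_mem_FS_singletons hx 0 fun _ => rfl).imp_right And.left
  obtain ⟨c, hc, b, hb⟩ := Hindman.FS_partition_regular a
    {Hindman.FS a ∩ (Multiset.toFinset ⁻¹' C), Hindman.FS a ∩ (Multiset.toFinset ⁻¹' Cᶜ)}
    (Set.toFinite _) fun x hx => by
      by_cases hxC : x.toFinset ∈ C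
      exacts [⟨_, .inl rfl, hx, hxC⟩, ⟨_, .inr rfl, hx, hxC⟩]
  obtain ⟨D, hD, rfl⟩ : ∃ D, (D = C ∨ D = Cᶜ) ∧ c = Hindman.FS a ∩ (Multiset.toFinset ⁻¹' D) := by
    rcases hc with rfl | rfl
    exacts [⟨C, .inl rfl, rfl⟩, ⟨Cᶜ, .inr rfl, rfl⟩]
  have hbD : ∀ J : Finset ℕ, J.Nonempty →
      J.biUnion (fun i => (b.get i).toFinset) ∈ D := fun J hJ => by
    rw [← Multiset.toFinset_sum]
    exact (hb (Hindman.FS.finsetSum b J hJ)).2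
  refine ⟨fun i => (b.get i).toFinset, fun i => ?_, fun i j hij => ?_, ?_⟩
  · exact Multiset.toFinset_nonempty.2 (ha _ (hb (Hindman.FS.singleton b i)).1).1
  · wlog h : i < j generalizing i j
    · exact (this j i hij.symm (hij.lt_or_gt.resolve_left h)).symm
    exact Multiset.disjoint_toFinset.2
      (Multiset.nodup_add.1 (ha _ (hb (Hindman.FS.add_two b i j h)).1).2).2.2
  · rcases hD with rfl | rfl
    exacts [.inl hbD, .inr hbD]

theorem exists_blockSeqInf_comp {L : ℕ → Finset ℕ} (hne : ∀ i, (L i).Nonempty)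
    (hdisj : Pairwise (Disjoint on L)) : ∃ φ : ℕ → ℕ, BlockSeqInf (L ∘ φ) := by
  have hmin : Filter.Tendsto (fun i => (L i).min' (hne i)) Filter.atTop Filter.atTop := by
    rw [← Nat.cofinite_eq_atTop]
    refine Function.Injective.tendsto_cofinite fun i j hij => ?_
    by_contra h
    exact disjoint_left.1 (hdisj h) (min'_mem _ _) (by rw [hij]; exact min'_mem _ _)
  obtain ⟨φ, -, hφ⟩ := exists_seq_of_forall_finset_exists (fun _ => True)
    (fun i j => ∀ x ∈ L i, ∀ y ∈ L j, x < y) fun s _ => by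
      obtain ⟨j, hj⟩ := (hmin.eventually_gt_atTop ((s.biUnion L).sup id)).exists
      refine ⟨j, trivial, fun i hi x hx y hy => ?_⟩
      calc x ≤ (s.biUnion L).sup id := le_sup (f := id) (mem_biUnion.2 ⟨i, hi, hx⟩)
        _ < (L j).min' (hne j) := hj
        _ ≤ y := min'_le _ _ hy
  exact ⟨φ, fun i => hne _, hφ⟩

theorem exists_isIP_subset_or_subset_compl (C : Set (Finset ℕ)) :
    ∃ B, IsIP B ∧ (B ⊆ C ∨ B ⊆ Cᶜ) := by
  classical
  obtain ⟨L, hne, hdisj, hC⟩ := exists_pairwise_disjoint_biUnion_mem_or_mem_compl C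
  obtain ⟨φ, hφ⟩ := exists_blockSeqInf_comp hne hdisj
  refine ⟨_, ⟨_, hφ, rfl⟩, ?_⟩
  have hsub : ∀ D : Set (Finset ℕ), (∀ J : Finset ℕ, J.Nonempty → J.biUnion L ∈ D) →
      {L' | ∃ K : Finset ℕ, K.Nonempty ∧ L' = K.biUnion (L ∘ φ)} ⊆ D := by
    rintro D hD _ ⟨K, hK, rfl⟩
    convert hD _ (hK.image φ) using 1
    rw [image_biUnion]
    rfl
  exact hC.imp (hsub C) (hsub Cᶜ)

theorem IsIP.exists_blockSeq_FU_subset {B : Set (Finset ℕ)} (hB : IsIP B) (n : ℕ) :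
    ∃ K : Fin n → Finset ℕ, BlockSeq K ∧ FU K ⊆ B := by
  classical
  obtain ⟨H, hH, rfl⟩ := hB
  refine ⟨fun i => H i, ⟨fun i => hH.1 i, fun i j hij => hH.2 i j hij⟩, ?_⟩
  rintro _ ⟨J, hJ, rfl⟩
  exact ⟨J.image (↑), hJ.image _, by rw [image_biUnion]⟩

theorem FU_finite {r : ℕ} (H : Fin r → Finset ℕ) : (FU H).Finite :=
  (Set.finite_range fun J : Finset (Fin r) => J.biUnion H).subset fun _ ⟨J, _, hJ⟩ => ⟨J, hJ.symm⟩

theorem exists_bound_blockSeq_FU_subset_or_subset_compl (n : ℕ) :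
    ∃ r, ∀ C : Set (Finset ℕ), ∃ K : Fin n → Finset ℕ,
      BlockSeq K ∧ (∀ i, K i ⊆ range r) ∧ (FU K ⊆ C ∨ FU K ⊆ Cᶜ) := by
  by_contra! h
  choose C hC using h
  let U := Ultrafilter.of (Filter.atTop : Filter ℕ)
  obtain ⟨B, hB, hBC⟩ := exists_isIP_subset_or_subset_compl {L | ∀ᶠ r in U, L ∈ C r}
  obtain ⟨K, hK, hKB⟩ := hB.exists_blockSeq_FU_subset n
  have hbound : ∀ᶠ r in U, ∀ i, K i ⊆ range r := by
    refine Filter.eventually_all.2 fun i => Ultrafilter.of_le _ ?_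
    obtain ⟨N, hN⟩ := exists_nat_subset_range (K i)
    exact Filter.eventually_atTop.2 ⟨N, fun r hr => hN.trans (range_mono hr)⟩
  have hlim : ∀ᶠ r in U, ∀ L ∈ FU K, (L ∈ C r ↔ ∀ᶠ r' in U, L ∈ C r') := by
    refine (Filter.eventually_all_finite (FU_finite K)).2 fun L _ => ?_
    by_cases hL : ∀ᶠ r' in U, L ∈ C r'
    · exact hL.mono fun r hr => iff_of_true hr hL
    · exact (Ultrafilter.eventually_not.2 hL).mono fun r hr => iff_of_false hr hL
  obtain ⟨r, hr, hr'⟩ := (hbound.and hlim).exists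
  exact not_or.2 (hC r K hK hr) (hBC.imp (fun h L hL => (hr' L hL).2 (h (hKB hL)))
    (fun h L hL => mt (hr' L hL).1 (h (hKB hL))))

theorem IsIPrStar.mono {r n : ℕ} {A : Set (Finset ℕ)} (hA : IsIPrStar r A) (hrn : r ≤ n) :
    IsIPrStar n A := by
  classical
  rintro _ ⟨H, hH, rfl⟩
  obtain ⟨L, hLA, J, hJ, rfl⟩ := hA (FU fun i => H (Fin.castLE hrn i))
    ⟨_, ⟨fun i => hH.1 _, fun i j hij => hH.2 _ _ hij⟩, rfl⟩
  exact ⟨_, hLA, J.image (Fin.castLE hrn), hJ.image _, by rw [image_biUnion]⟩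

theorem exists_mem_inter_subset_range_of_isIPrStar (r₁ r₂ : ℕ) :
    ∃ r, ∀ A B : Set (Finset ℕ), IsIPrStar r₁ A → IsIPrStar r₂ B →
      ∃ L ∈ A ∩ B, L ⊆ range r := by
  obtain ⟨r, hr⟩ := exists_bound_blockSeq_FU_subset_or_subset_compl (max r₁ r₂)
  refine ⟨r, fun A B hA hB => ?_⟩
  obtain ⟨K, hK, hKr, hKA⟩ := hr A
  have hFU_A : FU K ⊆ A := hKA.resolve_right fun h => by
    obtain ⟨L, hLA, hLK⟩ := hA.mono (le_max_left _ _) _ ⟨K, hK, rfl⟩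
    exact h hLK hLA
  obtain ⟨L, hLB, J, hJ, rfl⟩ := hB.mono (le_max_right _ _) _ ⟨K, hK, rfl⟩
  exact ⟨_, ⟨hFU_A ⟨J, hJ, rfl⟩, hLB⟩, biUnion_subset.2 fun i _ => hKr i⟩

theorem cr_prod {S T : Type*} [Semigroup S] [Semigroup T] {A : Set S} {B : Set T}
    (hA : IsCRSet A) (hB : IsCRSet B) : IsCRSet (A ×ˢ B) := by
  classical
  intro k
  obtain ⟨rA, hrA⟩ := hA.isIPrStar_theta k
  obtain ⟨rB, hrB⟩ := hB.isIPrStar_theta k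
  obtain ⟨r, hr⟩ := exists_mem_inter_subset_range_of_isIPrStar rA rB
  refine ⟨r, fun F hF hFk => ?_⟩
  obtain ⟨L, ⟨⟨hL, a, ha⟩, -, b, hb⟩, hLr⟩ := hr _ _
    (hrA (F.image (Prod.fst ∘ ·)) (hF.image _) (card_image_le.trans hFk))
    (hrB (F.image (Prod.snd ∘ ·)) (hF.image _) (card_image_le.trans hFk))
  refine ⟨L.card, card_pos.2 hL, fun i => (a i, b i), fun i => L.orderIsoOfFin rfl i,
    (Subtype.strictMono_coe _).comp (OrderIso.strictMono _),
    fun i => (mem_range.1 (hLr (L.orderIsoOfFin rfl i).2)).le, fun f hf => ⟨?_, ?_⟩⟩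
  · show MulHom.fst S T _ ∈ A
    rw [MulHom.map_crWord]
    exact ha _ (mem_image_of_mem _ hf)
  · show MulHom.snd S T _ ∈ B
    rw [MulHom.map_crWord]
    exact hb _ (mem_image_of_mem _ hf)
end

section
/- If a set A ⊆ ℕ (with addition) contains arithmetic progressions of arbitrary finite length and A = B ∪ C, then B or C contains arithmetic progressions of arbitrary finite length. -/
open Finset

/-- `A` contains arithmetic progressions of arbitrary finite length. -/
def APRich (A : Set ℕ) : Prop :=
  ∀ k : ℕ, ∃ a d : ℕ, 1 ≤ d ∧ ∀ i < k, a + i * d ∈ A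

theorem apRich_partition {A B C : Set ℕ} (hA : APRich A) (h : A = B ∪ C) :
    APRich B ∨ APRich C := by
  classical
  by_contra hBC
  push_neg at hBC
  obtain ⟨hB, hC⟩ := hBC
  rw [APRich] at hB hC
  push_neg at hB hC
  obtain ⟨kB, hkB⟩ := hB
  obtain ⟨kC, hkC⟩ := hC
  set k := max kB kC with hkdef
  have hk1 : 1 ≤ k := by
    rcases Nat.eq_zero_or_pos k with h0 | h1
    · exfalso
      have hkB0 : kB = 0 := by omega
      obtain ⟨i, hi, _⟩ := hkB 0 1 le_rfl
      omega
    · exact h1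
  obtain ⟨ι, _inst, hHJ⟩ := Combinatorics.Line.exists_mono_in_high_dimension (Fin k) Bool
  set n := Fintype.card ι with hn
  obtain ⟨a, d, hd, hAP⟩ := hA (n * (k - 1) + 1)
  set Col : (ι → Fin k) → Bool := fun x => decide (a + (∑ i, ((x i : ℕ))) * d ∈ B) with hCol
  obtain ⟨l, c, hmono⟩ := hHJ Col
  set M : Finset ι := Finset.univ.filter (fun i => l.idxFun i = none) with hM
  have he : 1 ≤ M.card := by
    obtain ⟨i, hi⟩ := l.proper
    exact Finset.card_pos.mpr ⟨i, by simp [hM, hi]⟩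
  set x0 : Fin k := ⟨0, hk1⟩ with hx0
  set base : ℕ := ∑ i ∈ Mᶜ, (((l.idxFun i).getD x0 : ℕ)) with hbase
  -- sum formula
  have hsum : ∀ x : Fin k, (∑ i, ((l x i : ℕ))) = M.card * (x : ℕ) + base := by
    intro x
    rw [← Finset.sum_add_sum_compl M]
    congr 1
    · rw [Finset.sum_congr rfl (fun i hi => ?_), Finset.sum_const, smul_eq_mul]
      have : l.idxFun i = none := by simpa [hM] using hi
      simp [Combinatorics.Line.coe_apply, this]
    · refine Finset.sum_congr rfl fun i hi => ?_
      have : l.idxFun i ≠ none := by simpa [hM] using hi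
      obtain ⟨v, hv⟩ := Option.ne_none_iff_exists'.mp this
      simp [Combinatorics.Line.coe_apply, hv]
  -- bound
  have hbound : ∀ x : Fin k, (∑ i, ((l x i : ℕ))) ≤ n * (k - 1) := by
    intro x
    calc (∑ i, ((l x i : ℕ))) ≤ ∑ _i : ι, (k - 1) :=
          Finset.sum_le_sum fun i _ => by
            have := (l x i).isLt; omega
      _ = n * (k - 1) := by simp [hn, mul_comm]
  -- each point of the mono line is in A
  have hmem : ∀ x : Fin k, a + (M.card * (x : ℕ) + base) * d ∈ A := by
    intro x
    rw [← hsum x]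
    exact hAP _ (by have := hbound x; omega)
  have key : ∀ x : Fin k,
      (a + base * d) + (x : ℕ) * (M.card * d) = a + (M.card * (x : ℕ) + base) * d := by
    intro x; ring
  cases c with
  | true =>
    obtain ⟨i, hik, hiB⟩ := hkB (a + base * d) (M.card * d)
      (by have := Nat.mul_le_mul he hd; omega)
    have hik' : i < k := lt_of_lt_of_le hik (le_max_left _ _)
    have := hmono ⟨i, hik'⟩
    rw [hCol] at this
    simp only [decide_eq_true_eq] at this
    rw [hsum ⟨i, hik'⟩] at this
    exact hiB (by rw [key ⟨i, hik'⟩]; exact this)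
  | false =>
    obtain ⟨i, hik, hiC⟩ := hkC (a + base * d) (M.card * d)
      (by have := Nat.mul_le_mul he hd; omega)
    have hik' : i < k := lt_of_lt_of_le hik (le_max_right _ _)
    have hcol := hmono ⟨i, hik'⟩
    rw [hCol] at hcol
    simp only [decide_eq_false_iff_not] at hcol
    rw [hsum ⟨i, hik'⟩] at hcol
    have hinA : a + (M.card * (↑(⟨i, hik'⟩ : Fin k)) + base) * d ∈ A := hmem ⟨i, hik'⟩
    rw [h] at hinA
    rcases hinA with hb | hc
    · exact hcol hb
    · exact hiC (by rw [key ⟨i, hik'⟩]; exact hc)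
end
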